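/- Let r̂ > 0 and θ > 0 and f(x) = 1/(1 + e^{-θ(x - r̂)}) with f(0) = y₀. The chord from (0, y₀) to any point (x₁, f(x₁)) with x₁ the unique point in (r̂, ∞) where the chord is tangent to f satisfies: the piecewise function g(x) = min{f(0) + slope·x, 1} is concave on [0, ∞) and g(x) ≥ f(x) for all x ≥ 0, provided slope·x₁ + y₀ = f(x₁) and slope = f'(x₁). -/

import Mathlib

open Set Real

/-!
Since `σ' = σ (1 - σ)` and `t (1 - t)` increases up to `t = 1/2`, the sigmoid `f` is convex on
`(-∞, r̂]` and concave on `[r̂, ∞)`. By tangency, the line `y = f 0 + f'(x₁) x` is the tangent to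
`f` at `x₁ ≥ r̂`, so the concave part of `f` lies below it. On `[0, r̂]` the convex `f` lies below
its chord, whose endpoints `(0, f 0)` and `(r̂, f r̂)` are on or below the line. Finally `f ≤ 1`,
and the minimum of two concave functions is concave.
-/

theorem concaveOn_const_add_mul {s : Set ℝ} (hs : Convex ℝ s) (p m : ℝ) :
    ConcaveOn ℝ s fun x => p + m * x :=
  ⟨hs, fun _ _ _ _ a b _ _ hab => le_of_eq (by simp only [smul_eq_mul]; linear_combination p * hab)⟩

theorem ConvexOn.comp_mul_sub {f : ℝ → ℝ} {s : Set ℝ} (hf : ConvexOn ℝ s f) (θ c : ℝ) :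
    ConvexOn ℝ ((fun x => θ * (x - c)) ⁻¹' s) fun x => f (θ * (x - c)) :=
  hf.comp_affineMap ⟨fun x => θ * (x - c), θ • LinearMap.id, fun _ _ => by
    simp only [vadd_eq_add, LinearMap.smul_apply, LinearMap.id_coe, id_eq, smul_eq_mul]; ring⟩

theorem ConcaveOn.comp_mul_sub {f : ℝ → ℝ} {s : Set ℝ} (hf : ConcaveOn ℝ s f) (θ c : ℝ) :
    ConcaveOn ℝ ((fun x => θ * (x - c)) ⁻¹' s) fun x => f (θ * (x - c)) :=
  hf.comp_affineMap ⟨fun x => θ * (x - c), θ • LinearMap.id, fun _ _ => by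
    simp only [vadd_eq_add, LinearMap.smul_apply, LinearMap.id_coe, id_eq, smul_eq_mul]; ring⟩

theorem ConcaveOn.le_add_deriv_mul_sub {S : Set ℝ} {f : ℝ → ℝ} (hf : ConcaveOn ℝ S f) {x y : ℝ}
    (hx : x ∈ S) (hy : y ∈ S) (hd : DifferentiableAt ℝ f x) :
    f y ≤ f x + deriv f x * (y - x) := by
  rcases lt_trichotomy y x with hyx | rfl | hxy
  · have h := hf.deriv_le_slope hy hx hyx hd
    rw [slope_def_field, le_div_iff₀ (sub_pos.2 hyx)] at h
    linarith
  · simp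
  · have h := hf.slope_le_deriv hx hy hxy hd
    rw [slope_def_field, div_le_iff₀ (sub_pos.2 hxy)] at h
    linarith

theorem ConvexOn.le_of_concaveOn_of_endpoints {f L : ℝ → ℝ} {a c x : ℝ}
    (hf : ConvexOn ℝ (Icc a c) f) (hL : ConcaveOn ℝ (Icc a c) L)
    (ha : f a ≤ L a) (hc : f c ≤ L c) (hx : x ∈ Icc a c) : f x ≤ L x := by
  have hac : a ≤ c := hx.1.trans hx.2
  have h := (hL.sub hf).ge_on_segment (left_mem_Icc.2 hac) (right_mem_Icc.2 hac)
    (by rwa [segment_eq_Icc hac])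
  simp only [Pi.sub_apply] at h
  exact sub_nonneg.1 ((le_min (sub_nonneg.2 ha) (sub_nonneg.2 hc)).trans h)

theorem le_add_deriv_mul_of_tangent_chord {f : ℝ → ℝ} {c x₁ x : ℝ}
    (hconv : ConvexOn ℝ (Icc 0 c) f) (hconc : ConcaveOn ℝ (Ici c) f) (hcx₁ : c ≤ x₁)
    (hd : DifferentiableAt ℝ f x₁) (htangent : f x₁ - f 0 = deriv f x₁ * x₁) (hx : 0 ≤ x) :
    f x ≤ f 0 + deriv f x₁ * x := by
  have h_tangent_line : ∀ y ∈ Ici c, f y ≤ f 0 + deriv f x₁ * y := fun y hy =>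
    (hconc.le_add_deriv_mul_sub hcx₁ hy hd).trans_eq (by linear_combination htangent)
  rcases le_total x c with hxc | hcx
  · exact hconv.le_of_concaveOn_of_endpoints (concaveOn_const_add_mul (convex_Icc 0 c) _ _)
      (by simp) (h_tangent_line c self_mem_Ici) ⟨hx, hxc⟩
  · exact h_tangent_line x hcx

namespace Real

theorem monotoneOn_deriv_sigmoid : MonotoneOn (deriv sigmoid) (Iic 0) := by
  intro x hx y hy hxy
  have hσx := sigmoid_le hxy
  have hσy : sigmoid y ≤ 2⁻¹ := sigmoid_zero ▸ sigmoid_le hy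
  simp only [deriv_sigmoid]
  nlinarith

theorem antitoneOn_deriv_sigmoid : AntitoneOn (deriv sigmoid) (Ici 0) := by
  intro x hx y hy hxy
  have hσy := sigmoid_le hxy
  have hσx : 2⁻¹ ≤ sigmoid x := sigmoid_zero ▸ sigmoid_le hx
  simp only [deriv_sigmoid]
  nlinarith

theorem convexOn_sigmoid_Iic : ConvexOn ℝ (Iic 0) sigmoid :=
  MonotoneOn.convexOn_of_deriv (convex_Iic 0) continuous_sigmoid.continuousOn
    differentiable_sigmoid.differentiableOn (monotoneOn_deriv_sigmoid.mono interior_subset)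

theorem concaveOn_sigmoid_Ici : ConcaveOn ℝ (Ici 0) sigmoid :=
  AntitoneOn.concaveOn_of_deriv (convex_Ici 0) continuous_sigmoid.continuousOn
    differentiable_sigmoid.differentiableOn (antitoneOn_deriv_sigmoid.mono interior_subset)

end Real

theorem concave_envelope_majorizes_general (θ rhat : ℝ) (hθ : 0 < θ)
    (f : ℝ → ℝ) (hf : f = fun x => 1 / (1 + Real.exp (-θ * (x - rhat))))
    (x₁ slope : ℝ) (hx₁ : rhat < x₁)
    (hslope : slope = deriv f x₁)
    (htangent : f x₁ - f 0 = slope * x₁)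
    (g : ℝ → ℝ) (hg : g = fun x => min (f 0 + slope * x) 1) :
    ConcaveOn ℝ (Set.Ici (0 : ℝ)) g ∧ ∀ x : ℝ, 0 ≤ x → f x ≤ g x := by
  have hσ : f = fun x => sigmoid (θ * (x - rhat)) := by
    rw [hf]; funext x; rw [sigmoid_def, one_div, neg_mul]
  have hconv : ConvexOn ℝ (Icc 0 rhat) f := hσ ▸ (convexOn_sigmoid_Iic.comp_mul_sub θ rhat).subset
    (fun x hx => mul_nonpos_of_nonneg_of_nonpos hθ.le (sub_nonpos.2 hx.2)) (convex_Icc 0 rhat)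
  have hconc : ConcaveOn ℝ (Ici rhat) f := hσ ▸ (concaveOn_sigmoid_Ici.comp_mul_sub θ rhat).subset
    (fun x hx => mul_nonneg hθ.le (sub_nonneg.2 hx)) (convex_Ici rhat)
  have hd : DifferentiableAt ℝ f x₁ := hσ ▸ by fun_prop
  subst hslope hg
  refine ⟨(concaveOn_const_add_mul (convex_Ici 0) _ _).inf (concaveOn_const 1 (convex_Ici 0)),
    fun x hx => le_min ?_ ?_⟩
  · exact le_add_deriv_mul_of_tangent_chord hconv hconc hx₁.le hd htangent hx
  · exact hσ ▸ sigmoid_le_one _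

theorem concave_envelope_majorizes (θ rhat : ℝ) (hθ : 0 < θ) (hrhat : 0 < rhat)
    (f : ℝ → ℝ) (hf : f = fun x => 1 / (1 + Real.exp (-θ * (x - rhat))))
    (x₁ slope : ℝ) (hx₁ : rhat < x₁)
    (hslope : slope = deriv f x₁)
    (htangent : f x₁ - f 0 = slope * x₁)
    (g : ℝ → ℝ) (hg : g = fun x => min (f 0 + slope * x) 1) :
    ConcaveOn ℝ (Set.Ici (0 : ℝ)) g ∧ ∀ x : ℝ, 0 ≤ x → f x ≤ g x :=
  concave_envelope_majorizes_general θ rhat hθ f hf x₁ slope hx₁ hslope htangent g hg
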